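/- Let H be an n-vertex r-uniform hypergraph with minimum degree at least C(⌊(n-1)/2⌋, r-1) + 1, where n ≥ 70 and 3 ≤ r ≤ ⌊(n-1)/2⌋ - 2. Let φ be any maximal injective partial map from hyperedges of H to vertex-pairs with φ(f) ⊆ f, and let F be the graph of matched pairs. Then F contains a triangle. -/

import Mathlib

open Finset

private lemma choose_le_of_le_half {n a b : ℕ} (hab : a ≤ b) (hb : b ≤ n / 2) :
    n.choose a ≤ n.choose b := by
  induction b, hab using Nat.le_induction with
  | base => exact le_rfl
  | succ k hk ih =>
    exact (ih (by omega)).trans (Nat.choose_le_succ_of_lt_half_left (by omega))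

private lemma choose_two_le {m k : ℕ} (h2 : 2 ≤ k) (hk : k ≤ m - 2) :
    m.choose 2 ≤ m.choose k := by
  rcases le_or_gt k (m / 2) with h | h
  · exact choose_le_of_le_half h2 h
  · have hkm : k ≤ m := by omega
    rw [← Nat.choose_symm hkm]
    exact choose_le_of_le_half (by omega) (by omega)

private lemma mantel {V : Type*} [Fintype V] (G : SimpleGraph V) [DecidableRel G.Adj]
    (h : ∀ a b c : V, ¬(G.Adj a b ∧ G.Adj b c ∧ G.Adj a c)) :
    4 * G.edgeFinset.card ≤ Fintype.card V ^ 2 := by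
  classical
  set n := Fintype.card V with hn
  set e := G.edgeFinset.card with he
  have hdeg : ∀ u v : V, G.Adj u v → G.degree u + G.degree v ≤ n := by
    intro u v huv
    have hdisj : Disjoint (G.neighborFinset u) (G.neighborFinset v) := by
      rw [Finset.disjoint_left]
      intro w hwu hwv
      rw [SimpleGraph.mem_neighborFinset] at hwu hwv
      exact h u v w ⟨huv, hwv, hwu⟩
    rw [← SimpleGraph.card_neighborFinset_eq_degree,
      ← SimpleGraph.card_neighborFinset_eq_degree,
      ← Finset.card_union_of_disjoint hdisj]
    exact Finset.card_le_univ _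
  have hA : ∑ v : V, (∑ u ∈ G.neighborFinset v, G.degree u) = ∑ u : V, G.degree u ^ 2 := by
    rw [Finset.sum_comm' (s' := fun u => G.neighborFinset u) (t' := univ)
      (by intro x y; simp [SimpleGraph.mem_neighborFinset, SimpleGraph.adj_comm])]
    refine Finset.sum_congr rfl fun u _ => ?_
    rw [Finset.sum_const, SimpleGraph.card_neighborFinset_eq_degree, smul_eq_mul, sq]
  have hA2 : ∑ v : V, (∑ _u ∈ G.neighborFinset v, G.degree v) = ∑ v : V, G.degree v ^ 2 := by
    refine Finset.sum_congr rfl fun v _ => ?_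
    rw [Finset.sum_const, SimpleGraph.card_neighborFinset_eq_degree, smul_eq_mul, sq]
  have hB : 2 * ∑ u : V, G.degree u ^ 2 ≤ 2 * (e * n) := by
    calc 2 * ∑ u : V, G.degree u ^ 2
        = ∑ v : V, ∑ u ∈ G.neighborFinset v, (G.degree u + G.degree v) := by
          rw [two_mul]
          nth_rw 1 [← hA]
          rw [← hA2, ← Finset.sum_add_distrib]
          exact Finset.sum_congr rfl fun v _ => (Finset.sum_add_distrib).symm
      _ ≤ ∑ v : V, ∑ _u ∈ G.neighborFinset v, n := by
          refine Finset.sum_le_sum fun v _ => Finset.sum_le_sum fun u hu => ?_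
          exact hdeg u v ((SimpleGraph.mem_neighborFinset _ _ _).mp hu).symm
      _ = ∑ v : V, G.degree v * n := by
          refine Finset.sum_congr rfl fun v _ => ?_
          rw [Finset.sum_const, SimpleGraph.card_neighborFinset_eq_degree, smul_eq_mul]
      _ = (∑ v : V, G.degree v) * n := by rw [Finset.sum_mul]
      _ = 2 * (e * n) := by rw [SimpleGraph.sum_degrees_eq_twice_card_edges, mul_assoc]
  have hS : ∑ u : V, G.degree u ^ 2 ≤ e * n :=
    Nat.le_of_mul_le_mul_left hB (by omega)
  have hC : (∑ v : V, G.degree v) ^ 2 ≤ n * ∑ u : V, G.degree u ^ 2 := by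
    have h := sq_sum_le_card_mul_sum_sq (s := (univ : Finset V))
      (f := fun v => (G.degree v : ℤ))
    rw [Finset.card_univ] at h
    exact_mod_cast h
  have hfin : (4 * e) * e ≤ n ^ 2 * e := by
    calc (4 * e) * e = (2 * e) ^ 2 := by ring
      _ ≤ n * ∑ u : V, G.degree u ^ 2 := by
          rw [← SimpleGraph.sum_degrees_eq_twice_card_edges]; exact hC
      _ ≤ n * (e * n) := Nat.mul_le_mul_left _ hS
      _ = n ^ 2 * e := by ring
  rcases Nat.eq_zero_or_pos e with h0 | hpos
  · rw [h0]; positivity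
  · exact Nat.le_of_mul_le_mul_right hfin hpos

theorem stmt_16 {V : Type*} [Fintype V] [DecidableEq V]
    (n r : ℕ) (hn : n = Fintype.card V) (hn70 : 70 ≤ n)
    (hr3 : 3 ≤ r) (hr : r ≤ (n - 1) / 2 - 2)
    (E : Finset (Finset V)) (hunif : ∀ e ∈ E, e.card = r)
    (hdeg : ∀ v : V, ((n - 1) / 2).choose (r - 1) + 1 ≤ (E.filter (fun e => v ∈ e)).card)
    (D : Finset (Finset V)) (hD : D ⊆ E)
    (φ : Finset V → Sym2 V)
    (hinj : Set.InjOn φ D)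
    (hsub : ∀ f ∈ D, ¬ (φ f).IsDiag ∧ ∀ x ∈ φ f, x ∈ f)
    (hmax : ¬ ∃ f ∈ E, f ∉ D ∧ ∃ x ∈ f, ∃ y ∈ f, x ≠ y ∧ ∀ g ∈ D, φ g ≠ s(x, y))
    (F : SimpleGraph V)
    (hF : ∀ x y, F.Adj x y ↔ ∃ f ∈ D, φ f = s(x, y)) :
    ∃ a b c : V, F.Adj a b ∧ F.Adj b c ∧ F.Adj a c := by
  classical
  by_contra htri0
  push_neg at htri0
  have htri : ∀ a b c : V, ¬(F.Adj a b ∧ F.Adj b c ∧ F.Adj a c) := by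
    intro a b c ⟨h1, h2, h3⟩; exact htri0 a b c h1 h2 h3
  push_neg at hmax
  -- every hyperedge is matched
  have hED : E = D := by
    refine Finset.Subset.antisymm ?_ hD
    intro f hf
    by_contra hfD
    obtain ⟨t, hts, ht3⟩ := Finset.exists_subset_card_eq (s := f) (n := 3) (by rw [hunif f hf]; omega)
    rw [Finset.card_eq_three] at ht3
    obtain ⟨a, b, c, hab, hac, hbc, rfl⟩ := ht3
    have ha : a ∈ f := hts (by simp)
    have hb : b ∈ f := hts (by simp)
    have hc : c ∈ f := hts (by simp)
    refine htri a b c ⟨?_, ?_, ?_⟩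
    · exact (hF a b).2 (hmax f hf hfD a ha b hb hab)
    · exact (hF b c).2 (hmax f hf hfD b hb c hc hbc)
    · exact (hF a c).2 (hmax f hf hfD a ha c hc hac)
  -- E injects into the edges of F
  have hcard : E.card ≤ F.edgeFinset.card := by
    rw [hED]
    refine Finset.card_le_card_of_injOn φ (fun f hf => ?_) hinj
    obtain ⟨x, y, hxy⟩ : ∃ x y, φ f = s(x, y) :=
      Sym2.ind (fun x y => ⟨x, y, rfl⟩) (φ f)
    rw [Finset.mem_coe, SimpleGraph.mem_edgeFinset, hxy, SimpleGraph.mem_edgeSet]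
    exact (hF x y).2 ⟨f, hf, hxy⟩
  -- degree sum
  have hsum : ∑ v : V, (E.filter (fun e => v ∈ e)).card = E.card * r := by
    have h1 : ∀ v : V, (E.filter (fun e => v ∈ e)).card
        = ∑ e ∈ E, if v ∈ e then 1 else 0 := fun v => Finset.card_filter _ _
    simp_rw [h1]
    rw [Finset.sum_comm]
    rw [Finset.sum_congr rfl (fun e he => ?_), Finset.sum_const, smul_eq_mul]
    rw [Finset.sum_boole, Finset.filter_univ_mem]
    exact_mod_cast hunif e he
  set A := ((n - 1) / 2).choose (r - 1) with hA
  have hlow : n * (A + 1) ≤ E.card * r := by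
    rw [← hsum]
    calc n * (A + 1) = (univ : Finset V).card * (A + 1) := by rw [Finset.card_univ, hn]
      _ ≤ ∑ v : V, (E.filter (fun e => v ∈ e)).card := by
          rw [← smul_eq_mul]
          exact Finset.card_nsmul_le_sum _ _ _ (fun v _ => hdeg v)
  have hman : 4 * F.edgeFinset.card ≤ n ^ 2 := by
    rw [hn]; exact mantel F htri
  -- arithmetic contradiction
  set m := (n - 1) / 2 with hm
  have hkey : r * n < 4 * (A + 1) := by
    have hc2 : m.choose 2 ≤ A := choose_two_le (by omega) (by omega)
    obtain ⟨k, hk⟩ : ∃ k, m = k + 34 := ⟨m - 34, by omega⟩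
    have e1 : k + 34 - 1 = k + 33 := by omega
    have h2 : (k + 34).choose 2 * 2 = (k + 34) * (k + 33) := by
      rw [Nat.choose_two_right, e1, Nat.div_mul_cancel]
      have := Nat.even_mul_succ_self (k + 33)
      exact (by rwa [mul_comm] at this : Even ((k + 34) * (k + 33))).two_dvd
    have hrn : r * n ≤ (k + 32) * (2 * (k + 34) + 2) :=
      Nat.mul_le_mul (by omega) (by omega)
    have hlt : (k + 32) * (2 * (k + 34) + 2) < 2 * ((k + 34) * (k + 33)) + 4 := by nlinarith
    have : m.choose 2 * 2 = (k + 34) * (k + 33) := by rw [hk]; exact h2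
    omega
  have hfinal : 4 * (n * (A + 1)) < 4 * (n * (A + 1)) := by
    calc 4 * (n * (A + 1)) ≤ 4 * (E.card * r) := Nat.mul_le_mul_left _ hlow
      _ = (4 * E.card) * r := by ring
      _ ≤ (4 * F.edgeFinset.card) * r := Nat.mul_le_mul_right _ (by omega)
      _ ≤ n ^ 2 * r := Nat.mul_le_mul_right _ hman
      _ = (r * n) * n := by ring
      _ < (4 * (A + 1)) * n := mul_lt_mul_of_pos_right hkey (by omega)
      _ = 4 * (n * (A + 1)) := by ring
  exact lt_irrefl _ hfinal
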